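/- Let λ > 0, Δ ≥ 0, and let α > 1 be a real number. Let ℓ_{m,λ}(x) := (1/(2λ))·exp(−|x−m|/λ) denote the Laplace density with location m and scale λ. Then (α−1)⁻¹·ln ∫_ℝ ℓ_{0,λ}(x)^α · ℓ_{Δ,λ}(x)^{1−α} dx = (α−1)⁻¹·ln( (α/(2α−1))·exp((α−1)·Δ/λ) + ((α−1)/(2α−1))·exp(−α·Δ/λ) ). -/

import Mathlib

/-! After collecting powers, the integrand is `(2λ)⁻¹ exp (((α - 1)|x - Δ| - α|x|) / λ)`.
Since `0 ≤ Δ`, this is a constant times `exp (c x)` on each of `(-∞, 0]`, `[0, Δ]` and `[Δ, ∞)`,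
with `c = 1/λ`, `-(2α - 1)/λ` and `-1/λ` respectively; summing the three elementary integrals
gives the closed form. -/

open MeasureTheory Real

/-- Laplace density with location `m` and scale `lam`. -/
noncomputable def laplacePDF (m lam x : ℝ) : ℝ :=
  (1 / (2 * lam)) * Real.exp (-|x - m| / lam)

open Set

theorem integral_exp_mul {c : ℝ} (hc : c ≠ 0) (u v : ℝ) :
    ∫ x in u..v, exp (c * x) = (exp (c * v) - exp (c * u)) / c := by
  rw [intervalIntegral.integral_comp_mul_left exp hc, integral_exp, smul_eq_mul, inv_mul_eq_div]

theorem integral_eq_setIntegral_Iic_add_Ioc_add_Ioi {E : Type*} [NormedAddCommGroup E]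
    [NormedSpace ℝ E] {f : ℝ → E} {a b : ℝ} (hab : a ≤ b) (h_Iic : IntegrableOn f (Iic a))
    (h_Ioc : IntegrableOn f (Ioc a b)) (h_Ioi : IntegrableOn f (Ioi b)) :
    ∫ x, f x = (∫ x in Iic a, f x) + (∫ x in a..b, f x) + ∫ x in Ioi b, f x := by
  rw [← intervalIntegral.integral_Iic_add_Ioi h_Iic (Ioc_union_Ioi_eq_Ioi hab ▸
      h_Ioc.union h_Ioi), ← Ioc_union_Ioi_eq_Ioi hab,
    setIntegral_union (Ioc_disjoint_Ioi le_rfl) measurableSet_Ioi h_Ioc h_Ioi,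
    intervalIntegral.integral_of_le hab, add_assoc]

theorem integral_exp_mul_abs_sub_sub_mul_abs {a b d : ℝ} (hba : b < a) (hab : a + b ≠ 0)
    (hd : 0 ≤ d) :
    ∫ x, exp (b * |x - d| - a * |x|) =
      (exp (b * d) + exp (-(a * d))) / (a - b) + (exp (b * d) - exp (-(a * d))) / (a + b) := by
  set f : ℝ → ℝ := fun x ↦ exp (b * |x - d| - a * |x|)
  have left : EqOn f (fun x ↦ exp (b * d) * exp ((a - b) * x)) (Iic 0) := by
    rintro x (hx : x ≤ 0)
    simp only [f, abs_of_nonpos hx, abs_of_nonpos (by linarith : x - d ≤ 0), ← exp_add]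
    ring_nf
  have mid : EqOn f (fun x ↦ exp (b * d) * exp (-(a + b) * x)) (uIcc 0 d) := by
    rintro x hx
    rw [uIcc_of_le hd] at hx
    simp only [f, abs_of_nonneg hx.1, abs_of_nonpos (by linarith [hx.2] : x - d ≤ 0), ← exp_add]
    ring_nf
  have right : EqOn f (fun x ↦ exp (-(b * d)) * exp (-(a - b) * x)) (Ioi d) := by
    rintro x (hx : d < x)
    simp only [f, abs_of_pos (by linarith : 0 < x), abs_of_pos (by linarith : 0 < x - d),
      ← exp_add]
    ring_nf
  have hab' : 0 < a - b := sub_pos.2 hba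
  have int_left : IntegrableOn f (Iic 0) :=
    IntegrableOn.congr_fun ((integrableOn_exp_mul_Iic hab' 0).const_mul _) left.symm
      measurableSet_Iic
  have int_mid : IntegrableOn f (Ioc 0 d) :=
    (Continuous.integrableOn_Icc (by fun_prop)).mono_set Ioc_subset_Icc_self
  have int_right : IntegrableOn f (Ioi d) :=
    IntegrableOn.congr_fun ((integrableOn_exp_mul_Ioi (neg_lt_zero.2 hab') d).const_mul _)
      right.symm measurableSet_Ioi
  rw [integral_eq_setIntegral_Iic_add_Ioc_add_Ioi hd int_left int_mid int_right,
    setIntegral_congr_fun measurableSet_Iic left,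
    intervalIntegral.integral_congr mid, setIntegral_congr_fun measurableSet_Ioi right,
    integral_const_mul, intervalIntegral.integral_const_mul, integral_const_mul,
    integral_exp_mul_Iic hab', integral_exp_mul (neg_ne_zero.2 hab),
    integral_exp_mul_Ioi (neg_lt_zero.2 hab')]
  have h_mid : exp (b * d) * exp (-(a + b) * d) = exp (-(a * d)) := by
    rw [← exp_add]; ring_nf
  have h_right : exp (-(b * d)) * exp (-(a - b) * d) = exp (-(a * d)) := by
    rw [← exp_add]; ring_nf
  simp only [mul_zero, exp_zero, mul_one, mul_div_assoc', mul_sub, mul_neg, h_mid, h_right]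
  field_simp
  ring

theorem laplacePDF_rpow_mul_rpow_one_sub {lam : ℝ} (hlam : 0 ≤ lam) (α m m' x : ℝ) :
    laplacePDF m lam x ^ α * laplacePDF m' lam x ^ (1 - α) =
      1 / (2 * lam) * exp ((α - 1) / lam * |x - m'| - α / lam * |x - m|) := by
  have hc : 0 ≤ 1 / (2 * lam) := by positivity
  rw [laplacePDF, laplacePDF, mul_rpow hc (exp_nonneg _), mul_rpow hc (exp_nonneg _),
    ← exp_mul, ← exp_mul, mul_mul_mul_comm, ← rpow_add' hc (by simp), add_sub_cancel, rpow_one,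
    ← exp_add]
  ring_nf

theorem laplace_renyi_divergence (lam Δ α : ℝ) (hlam : 0 < lam) (hΔ : 0 ≤ Δ) (hα : 1 < α) :
    (α - 1)⁻¹ * Real.log (∫ x : ℝ, laplacePDF 0 lam x ^ α * laplacePDF Δ lam x ^ (1 - α)) =
      (α - 1)⁻¹ * Real.log ((α / (2 * α - 1)) * Real.exp ((α - 1) * Δ / lam) +
        ((α - 1) / (2 * α - 1)) * Real.exp (-α * Δ / lam)) := by
  have h_lt : (α - 1) / lam < α / lam := by gcongr; linarith
  have h2α : 2 * α - 1 ≠ 0 := by linarith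
  have h_sum : α / lam + (α - 1) / lam ≠ 0 := by
    rw [← add_div, show α + (α - 1) = 2 * α - 1 by ring]; exact div_ne_zero h2α hlam.ne'
  simp_rw [laplacePDF_rpow_mul_rpow_one_sub hlam.le, sub_zero]
  rw [integral_const_mul, integral_exp_mul_abs_sub_sub_mul_abs h_lt h_sum hΔ,
    show (α - 1) / lam * Δ = (α - 1) * Δ / lam by ring,
    show -(α / lam * Δ) = -α * Δ / lam by ring]
  congr 2
  rw [← sub_div, ← add_div, sub_sub_cancel, show α + (α - 1) = 2 * α - 1 by ring]
  field_simp
  ring
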